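/- Every τ-compact Ptolemy diagram T of the infinite strip satisfies condition (C): T ∪ nc(T) contains a connecting arc (an arc joining an upper marked point to a lower marked point). -/
import Mathlib


/-- A marked point of the infinite strip `B∞`: an upper point `ℓ i` or a lower point `r j`. -/
inductive MPoint : Type
  | up : ℤ → MPoint
  | low : ℤ → MPoint
deriving DecidableEq

namespace Strip

open MPoint

/-- A curve is an unordered pair of marked points. -/
abbrev Curve := Sym2 MPoint

/-- Edges of the strip: `{ℓ_i, ℓ_{i+1}}` or `{r_i, r_{i+1}}`. -/
def IsEdge (c : Curve) : Prop :=
  ∃ i : ℤ, c = s(up i, up (i + 1)) ∨ c = s(low i, low (i + 1))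

/-- Arcs: non-degenerate, non-edge unordered pairs of marked points. -/
def IsArc (c : Curve) : Prop := ¬ c.IsDiag ∧ ¬ IsEdge c

/-- A connecting arc joins an upper and a lower marked point. -/
def IsConnecting (c : Curve) : Prop := ∃ i j : ℤ, c = s(up i, low j)

/-- The crossing relation on curves of the strip, given by the explicit index
conditions of Liu–Paquette (cases according to the type of `u`). -/
def Crosses (u v : Curve) : Prop :=
  (∃ i j p q : ℤ, ((i < p ∧ p < j ∧ j < q) ∨ (p < i ∧ i < q ∧ q < j)) ∧
      u = s(up i, up j) ∧ v = s(up p, up q)) ∨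
  (∃ i j p q : ℤ, (i < p ∧ p < j) ∧ u = s(up i, up j) ∧ v = s(up p, low q)) ∨
  (∃ i j p q : ℤ, ((i > p ∧ p > j ∧ j > q) ∨ (p > i ∧ i > q ∧ q > j)) ∧
      u = s(low i, low j) ∧ v = s(low p, low q)) ∨
  (∃ i j p q : ℤ, (i > q ∧ q > j) ∧ u = s(low i, low j) ∧ v = s(up p, low q)) ∨
  (∃ i j p q : ℤ, (p < i ∧ i < q) ∧ u = s(up i, low j) ∧ v = s(up p, up q)) ∨
  (∃ i j p q : ℤ, (p > j ∧ j > q) ∧ u = s(up i, low j) ∧ v = s(low p, low q)) ∨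
  (∃ i j p q : ℤ, ((i > p ∧ j > q) ∨ (i < p ∧ j < q)) ∧
      u = s(up i, low j) ∧ v = s(up p, low q))

/-- The translation `τ` on marked points, shifting indices by `+1`. -/
def tauP : MPoint → MPoint
  | up i => up (i + 1)
  | low i => low (i + 1)

/-- The inverse translation `τ⁻¹` on marked points. -/
def tauInvP : MPoint → MPoint
  | up i => up (i - 1)
  | low i => low (i - 1)

/-- The translation `τ` on curves. -/
def tau (c : Curve) : Curve := c.map tauP

/-- The inverse translation `τ⁻¹` on curves. -/
def tauInv (c : Curve) : Curve := c.map tauInvP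

/-- `key p q` is the position of the curve `[p,q]` in the clockwise linear order `>_p`
on the set `[p,−]` of curves at `p`, valued in `ℤ ×ₗ ℤ` (lexicographic order).
For `p = ℓ_P`: curves to upper points right of `p` (tier 2, increasing with index),
then connecting curves (tier 1, decreasing with index),
then curves to upper points left of `p` (tier 0, decreasing with index); dually for lower `p`. -/
def key : MPoint → MPoint → ℤ ×ₗ ℤ
  | up P, up e => if P < e then toLex (2, e) else toLex (0, -e)
  | up _, low c => toLex (1, -c)
  | low P, low e => if P < e then toLex (2, e) else toLex (0, -e)
  | low _, up c => toLex (1, -c)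

/-- `GtAt p u v` means `u >_p v`: `u` and `v` are curves sharing the endpoint `p`
and `u` is bigger than `v` in the clockwise linear order at `p`. -/
def GtAt (p : MPoint) (u v : Curve) : Prop :=
  ∃ x y : MPoint, x ≠ p ∧ y ≠ p ∧ u = s(p, x) ∧ v = s(p, y) ∧ key p y < key p x

/-- `u₃` is a middle term from `u₂` to `u₁`: a curve (arc or edge) with
`u₂ <_{p₁} u₃ <_{p₂} u₁` for some marked points `p₁`, `p₂`. -/
def IsMiddleTerm (u₂ u₁ u₃ : Curve) : Prop :=
  ¬ u₃.IsDiag ∧ ∃ p₁ p₂ : MPoint, GtAt p₁ u₃ u₂ ∧ GtAt p₂ u₁ u₃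

/-- `nc T`: the set of arcs crossing no arc of `T`. -/
def nc (T : Set Curve) : Set Curve :=
  {u | IsArc u ∧ ∀ v ∈ T, ¬ Crosses u v}

/-- `T` is a Ptolemy diagram: a set of arcs such that for any two crossing arcs
`[p,q],[i,j] ∈ T`, those of `[p,i],[p,j],[q,i],[q,j]` which are arcs lie in `T`. -/
def IsPtolemy (T : Set Curve) : Prop :=
  (∀ u ∈ T, IsArc u) ∧
  ∀ p q i j : MPoint, s(p, q) ∈ T → s(i, j) ∈ T → Crosses s(p, q) s(i, j) →
    (IsArc s(p, i) → s(p, i) ∈ T) ∧ (IsArc s(p, j) → s(p, j) ∈ T) ∧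
    (IsArc s(q, i) → s(q, i) ∈ T) ∧ (IsArc s(q, j) → s(q, j) ∈ T)

/-- `T_u`: the set of arcs of `T` crossing `u`. -/
def crossSet (T : Set Curve) (u : Curve) : Set Curve := {v ∈ T | Crosses v u}

/-- `p` is upper left `T`-bounded: `[p, ℓ_i] ∉ T` for all sufficiently small `i`. -/
def UpperLeftBounded (T : Set Curve) (p : MPoint) : Prop :=
  ∃ j : ℤ, ∀ i : ℤ, i < j → s(p, up i) ∉ T

/-- `p` is upper right `T`-bounded: `[p, ℓ_i] ∉ T` for all sufficiently large `i`. -/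
def UpperRightBounded (T : Set Curve) (p : MPoint) : Prop :=
  ∃ j : ℤ, ∀ i : ℤ, i > j → s(p, up i) ∉ T

/-- `p` is lower left `T`-bounded: `[p, r_i] ∉ T` for all sufficiently large `i`. -/
def LowerLeftBounded (T : Set Curve) (p : MPoint) : Prop :=
  ∃ j : ℤ, ∀ i : ℤ, i > j → s(p, low i) ∉ T

/-- `p` is lower right `T`-bounded: `[p, r_i] ∉ T` for all sufficiently small `i`. -/
def LowerRightBounded (T : Set Curve) (p : MPoint) : Prop :=
  ∃ j : ℤ, ∀ i : ℤ, i < j → s(p, low i) ∉ T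

/-- Condition (B): every lower right `T`-bounded marked point is upper right
`T`-bounded, and every upper left `T`-bounded marked point is lower left `T`-bounded. -/
def CondB (T : Set Curve) : Prop :=
  ∀ p : MPoint, (LowerRightBounded T p → UpperRightBounded T p) ∧
    (UpperLeftBounded T p → LowerLeftBounded T p)

/-- Condition (B'): the dual of condition (B). -/
def CondB' (T : Set Curve) : Prop :=
  ∀ p : MPoint, (LowerLeftBounded T p → UpperLeftBounded T p) ∧
    (UpperRightBounded T p → LowerRightBounded T p)

/-- Condition (C): `T ∪ nc T` contains a connecting arc. -/
def CondC (T : Set Curve) : Prop := ∃ c ∈ T ∪ nc T, IsConnecting c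

/-- `S0` is a τ-basis of `Ω`: a subset of `Ω` such that for every `u₁ ∈ Ω` there is
`u₂ ∈ S0` with `τ u₂` crossing `u₁`, and all middle terms from `u₂` to `u₁` lie in `Ω`
whenever `u₂` crosses `u₁`. -/
def IsTauBasis (Ω S0 : Set Curve) : Prop :=
  S0 ⊆ Ω ∧ ∀ u₁ ∈ Ω, ∃ u₂ ∈ S0, Crosses (tau u₂) u₁ ∧
    (Crosses u₂ u₁ → ∀ u₃ : Curve, IsMiddleTerm u₂ u₁ u₃ → u₃ ∈ Ω)

/-- `T` is τ-compact: for every arc `u`, the set `T_u` admits a finite τ-basis. -/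
def TauCompact (T : Set Curve) : Prop :=
  ∀ u : Curve, IsArc u → ∃ S0 : Set Curve, S0.Finite ∧ IsTauBasis (crossSet T u) S0

/-- `T̄`: the set `T` together with all edges of the strip. -/
def withEdges (T : Set Curve) : Set Curve := T ∪ {c | IsEdge c}

end Strip

namespace Strip

open MPoint

lemma arcConn {i j : ℤ} : IsArc s(up i, low j) := by
  constructor
  · simp [Sym2.mk_isDiag_iff]
  · rintro ⟨k, hk | hk⟩ <;> simp [Sym2.eq_iff] at hk

lemma arcUU {a b : ℤ} (h : a + 1 < b) : IsArc s(up a, up b) := by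
  constructor
  · simp only [Sym2.mk_isDiag_iff, up.injEq]; omega
  · rintro ⟨k, hk | hk⟩ <;> simp [Sym2.eq_iff] at hk <;> omega

lemma arcLL {a b : ℤ} (h : a + 1 < b) : IsArc s(low a, low b) := by
  constructor
  · simp only [Sym2.mk_isDiag_iff, low.injEq]; omega
  · rintro ⟨k, hk | hk⟩ <;> simp [Sym2.eq_iff] at hk <;> omega

lemma crossUU {a b c d : ℤ} (h1 : a < c) (h2 : c < b) (h3 : b < d) :
    Crosses s(up a, up b) s(up c, up d) :=
  Or.inl ⟨a, b, c, d, Or.inl ⟨h1, h2, h3⟩, rfl, rfl⟩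

lemma crossLL {a b c d : ℤ} (h1 : a < c) (h2 : c < b) (h3 : b < d) :
    Crosses s(low a, low b) s(low c, low d) :=
  Or.inr (Or.inr (Or.inl ⟨b, a, d, c, Or.inr ⟨h3, h2, h1⟩, Sym2.eq_swap, Sym2.eq_swap⟩))

lemma crossUC {a b : ℤ} (h1 : a < 0) (h2 : 0 < b) :
    Crosses s(up a, up b) s(up 0, low 0) :=
  Or.inr (Or.inl ⟨a, b, 0, 0, ⟨h1, h2⟩, rfl, rfl⟩)

lemma crossLC {a b : ℤ} (h1 : a < 0) (h2 : 0 < b) :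
    Crosses s(low a, low b) s(up 0, low 0) :=
  Or.inr (Or.inr (Or.inr (Or.inl ⟨b, a, 0, 0, ⟨h2, h1⟩, Sym2.eq_swap, rfl⟩)))

/-- size measure on marked points -/
def mag : MPoint → ℤ
  | up i => |i|
  | low i => |i|

/-- size measure on curves -/
def siz : Curve → ℤ := Sym2.lift ⟨fun x y => max (mag x) (mag y), fun _ _ => max_comm _ _⟩

lemma mainUpper (T : Set Curve) (hT : IsPtolemy T) (h : TauCompact T)
    (hnc : ∀ v ∈ T, ¬ IsConnecting v)
    (hcov : ∀ c : ℤ, ∃ p q : ℤ, s(up p, up q) ∈ T ∧ p < c ∧ c < q) : False := by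
  have A1 : ∀ B : ℤ, ∃ p q : ℤ, s(up p, up q) ∈ T ∧ p < 0 ∧ 0 < q ∧ B < q := by
    intro B
    by_contra hA
    push_neg at hA
    obtain ⟨q0, ⟨p0, hmem0, hp0, hq0⟩, hmax⟩ :=
      Int.exists_greatest_of_bdd (P := fun q => ∃ p, s(up p, up q) ∈ T ∧ p < 0 ∧ 0 < q)
        ⟨B, fun z ⟨p, hm, hp, hz⟩ => hA p z hm hp hz⟩
        (let ⟨p, q, hm, hp, hq⟩ := hcov 0; ⟨q, p, hm, hp, hq⟩)
    obtain ⟨a, b, hab, ha, hb⟩ := hcov q0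
    by_cases hc : a < 0
    · exact absurd (hmax b ⟨a, hab, hc, by omega⟩) (by omega)
    · have hcr := crossUU (a := p0) (b := q0) (c := a) (d := b) (by omega) ha hb
      have hmem := (hT.2 (up p0) (up q0) (up a) (up b) hmem0 hab hcr).2.1 (arcUU (by omega))
      exact absurd (hmax b ⟨p0, hmem, hp0, by omega⟩) (by omega)
  have A2 : ∀ B : ℤ, ∃ p q : ℤ, s(up p, up q) ∈ T ∧ p < 0 ∧ 0 < q ∧ p < B := by
    intro B
    by_contra hA
    push_neg at hA
    obtain ⟨p0, ⟨q0, hmem0, hp0, hq0⟩, hmin⟩ :=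
      Int.exists_least_of_bdd (P := fun p => ∃ q, s(up p, up q) ∈ T ∧ p < 0 ∧ 0 < q)
        ⟨B, fun z ⟨q, hm, hp, hz⟩ => hA z q hm hp hz⟩
        (let ⟨p, q, hm, hp, hq⟩ := hcov 0; ⟨p, q, hm, hp, hq⟩)
    obtain ⟨a, b, hab, ha, hb⟩ := hcov p0
    by_cases hc : 0 < b
    · exact absurd (hmin a ⟨b, hab, by omega, hc⟩) (by omega)
    · have hcr := crossUU (a := a) (b := b) (c := p0) (d := q0) ha hb (by omega)
      have hmem := (hT.2 (up a) (up b) (up p0) (up q0) hab hmem0 hcr).2.1 (arcUU (by omega))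
      exact absurd (hmin a ⟨q0, hmem, by omega, hq0⟩) (by omega)
  have A3 : ∀ N : ℤ, 0 ≤ N → ∃ p q : ℤ, s(up p, up q) ∈ T ∧ p < -N ∧ N < q := by
    intro N hN
    obtain ⟨p1, q1, h1, hp1, hq1, hBq1⟩ := A1 N
    obtain ⟨p2, q2, h2, hp2, hq2, hBp2⟩ := A2 (-N)
    by_cases hc1 : p1 < -N
    · exact ⟨p1, q1, h1, hc1, hBq1⟩
    by_cases hc2 : N < q2
    · exact ⟨p2, q2, h2, hBp2, hc2⟩
    have hcr := crossUU (a := p2) (b := q2) (c := p1) (d := q1) (by omega) (by omega) (by omega)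
    exact ⟨p2, q1, (hT.2 (up p2) (up q2) (up p1) (up q1) h2 h1 hcr).2.1 (arcUU (by omega)),
      hBp2, hBq1⟩
  obtain ⟨S0, hfin, hsub, hbasis⟩ := h s(up 0, low 0) arcConn
  obtain ⟨M, hM⟩ := (hfin.image siz).bddAbove
  set M' : ℤ := max M 0 with hM'
  have hM0 : (0:ℤ) ≤ M' := le_max_right _ _
  obtain ⟨p, q, hpq, hp, hq⟩ := A3 (M' + 2) (by omega)
  have hu1 : s(up p, up q) ∈ crossSet T s(up 0, low 0) :=
    ⟨hpq, crossUC (by omega) (by omega)⟩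
  obtain ⟨u2, hu2S, hcr, -⟩ := hbasis s(up p, up q) hu1
  have hu2T : u2 ∈ T := (hsub hu2S).1
  induction u2 using Sym2.ind with
  | _ x y =>
    have hsz : max (mag x) (mag y) ≤ M' := by
      have h0 : siz s(x, y) ≤ M := hM ⟨s(x, y), hu2S, rfl⟩
      have h1 : siz s(x, y) = max (mag x) (mag y) := Sym2.lift_mk _ _ _
      omega
    cases x with
    | up a =>
      cases y with
      | low b => exact hnc _ hu2T ⟨a, b, rfl⟩
      | up b =>
        obtain ⟨ha1, ha2⟩ := abs_le.mp (le_trans (le_max_left (mag (up a)) (mag (up b))) hsz)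
        obtain ⟨hb1, hb2⟩ := abs_le.mp (le_trans (le_max_right (mag (up a)) (mag (up b))) hsz)
        have htau : tau s(up a, up b) = s(up (a+1), up (b+1)) := rfl
        rw [htau] at hcr
        rcases hcr with ⟨i,j,p',q',hcond,hu,hv⟩|⟨i,j,p',q',hcond,hu,hv⟩|⟨i,j,p',q',hcond,hu,hv⟩|⟨i,j,p',q',hcond,hu,hv⟩|⟨i,j,p',q',hcond,hu,hv⟩|⟨i,j,p',q',hcond,hu,hv⟩|⟨i,j,p',q',hcond,hu,hv⟩ <;>
          simp only [Sym2.eq_iff, up.injEq, low.injEq, reduceCtorEq, and_false, false_and,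
            and_true, true_and, or_false, false_or, or_self] at hu hv <;>
          omega
    | low a =>
      cases y with
      | up b => exact hnc _ hu2T ⟨b, a, Sym2.eq_swap⟩
      | low b =>
        have htau : tau s(low a, low b) = s(low (a+1), low (b+1)) := rfl
        rw [htau] at hcr
        rcases hcr with ⟨i,j,p',q',hcond,hu,hv⟩|⟨i,j,p',q',hcond,hu,hv⟩|⟨i,j,p',q',hcond,hu,hv⟩|⟨i,j,p',q',hcond,hu,hv⟩|⟨i,j,p',q',hcond,hu,hv⟩|⟨i,j,p',q',hcond,hu,hv⟩|⟨i,j,p',q',hcond,hu,hv⟩ <;>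
          simp only [Sym2.eq_iff, up.injEq, low.injEq, reduceCtorEq, and_false, false_and,
            and_true, true_and, or_false, false_or, or_self] at hu hv

lemma mainLower (T : Set Curve) (hT : IsPtolemy T) (h : TauCompact T)
    (hnc : ∀ v ∈ T, ¬ IsConnecting v)
    (hcov : ∀ c : ℤ, ∃ p q : ℤ, s(low p, low q) ∈ T ∧ p < c ∧ c < q) : False := by
  have A1 : ∀ B : ℤ, ∃ p q : ℤ, s(low p, low q) ∈ T ∧ p < 0 ∧ 0 < q ∧ B < q := by
    intro B
    by_contra hA
    push_neg at hA
    obtain ⟨q0, ⟨p0, hmem0, hp0, hq0⟩, hmax⟩ :=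
      Int.exists_greatest_of_bdd (P := fun q => ∃ p, s(low p, low q) ∈ T ∧ p < 0 ∧ 0 < q)
        ⟨B, fun z ⟨p, hm, hp, hz⟩ => hA p z hm hp hz⟩
        (let ⟨p, q, hm, hp, hq⟩ := hcov 0; ⟨q, p, hm, hp, hq⟩)
    obtain ⟨a, b, hab, ha, hb⟩ := hcov q0
    by_cases hc : a < 0
    · exact absurd (hmax b ⟨a, hab, hc, by omega⟩) (by omega)
    · have hcr := crossLL (a := p0) (b := q0) (c := a) (d := b) (by omega) ha hb
      have hmem := (hT.2 (low p0) (low q0) (low a) (low b) hmem0 hab hcr).2.1 (arcLL (by omega))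
      exact absurd (hmax b ⟨p0, hmem, hp0, by omega⟩) (by omega)
  have A2 : ∀ B : ℤ, ∃ p q : ℤ, s(low p, low q) ∈ T ∧ p < 0 ∧ 0 < q ∧ p < B := by
    intro B
    by_contra hA
    push_neg at hA
    obtain ⟨p0, ⟨q0, hmem0, hp0, hq0⟩, hmin⟩ :=
      Int.exists_least_of_bdd (P := fun p => ∃ q, s(low p, low q) ∈ T ∧ p < 0 ∧ 0 < q)
        ⟨B, fun z ⟨q, hm, hp, hz⟩ => hA z q hm hp hz⟩
        (let ⟨p, q, hm, hp, hq⟩ := hcov 0; ⟨p, q, hm, hp, hq⟩)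
    obtain ⟨a, b, hab, ha, hb⟩ := hcov p0
    by_cases hc : 0 < b
    · exact absurd (hmin a ⟨b, hab, by omega, hc⟩) (by omega)
    · have hcr := crossLL (a := a) (b := b) (c := p0) (d := q0) ha hb (by omega)
      have hmem := (hT.2 (low a) (low b) (low p0) (low q0) hab hmem0 hcr).2.1 (arcLL (by omega))
      exact absurd (hmin a ⟨q0, hmem, by omega, hq0⟩) (by omega)
  have A3 : ∀ N : ℤ, 0 ≤ N → ∃ p q : ℤ, s(low p, low q) ∈ T ∧ p < -N ∧ N < q := by
    intro N hN
    obtain ⟨p1, q1, h1, hp1, hq1, hBq1⟩ := A1 N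
    obtain ⟨p2, q2, h2, hp2, hq2, hBp2⟩ := A2 (-N)
    by_cases hc1 : p1 < -N
    · exact ⟨p1, q1, h1, hc1, hBq1⟩
    by_cases hc2 : N < q2
    · exact ⟨p2, q2, h2, hBp2, hc2⟩
    have hcr := crossLL (a := p2) (b := q2) (c := p1) (d := q1) (by omega) (by omega) (by omega)
    exact ⟨p2, q1, (hT.2 (low p2) (low q2) (low p1) (low q1) h2 h1 hcr).2.1 (arcLL (by omega)),
      hBp2, hBq1⟩
  obtain ⟨S0, hfin, hsub, hbasis⟩ := h s(up 0, low 0) arcConn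
  obtain ⟨M, hM⟩ := (hfin.image siz).bddAbove
  set M' : ℤ := max M 0 with hM'
  have hM0 : (0:ℤ) ≤ M' := le_max_right _ _
  obtain ⟨p, q, hpq, hp, hq⟩ := A3 (M' + 2) (by omega)
  have hu1 : s(low p, low q) ∈ crossSet T s(up 0, low 0) :=
    ⟨hpq, crossLC (by omega) (by omega)⟩
  obtain ⟨u2, hu2S, hcr, -⟩ := hbasis s(low p, low q) hu1
  have hu2T : u2 ∈ T := (hsub hu2S).1
  induction u2 using Sym2.ind with
  | _ x y =>
    have hsz : max (mag x) (mag y) ≤ M' := by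
      have h0 : siz s(x, y) ≤ M := hM ⟨s(x, y), hu2S, rfl⟩
      have h1 : siz s(x, y) = max (mag x) (mag y) := Sym2.lift_mk _ _ _
      omega
    cases x with
    | up a =>
      cases y with
      | low b => exact hnc _ hu2T ⟨a, b, rfl⟩
      | up b =>
        have htau : tau s(up a, up b) = s(up (a+1), up (b+1)) := rfl
        rw [htau] at hcr
        rcases hcr with ⟨i,j,p',q',hcond,hu,hv⟩|⟨i,j,p',q',hcond,hu,hv⟩|⟨i,j,p',q',hcond,hu,hv⟩|⟨i,j,p',q',hcond,hu,hv⟩|⟨i,j,p',q',hcond,hu,hv⟩|⟨i,j,p',q',hcond,hu,hv⟩|⟨i,j,p',q',hcond,hu,hv⟩ <;>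
          simp only [Sym2.eq_iff, up.injEq, low.injEq, reduceCtorEq, and_false, false_and,
            and_true, true_and, or_false, false_or, or_self] at hu hv
    | low a =>
      cases y with
      | up b => exact hnc _ hu2T ⟨b, a, Sym2.eq_swap⟩
      | low b =>
        obtain ⟨ha1, ha2⟩ := abs_le.mp (le_trans (le_max_left (mag (low a)) (mag (low b))) hsz)
        obtain ⟨hb1, hb2⟩ := abs_le.mp (le_trans (le_max_right (mag (low a)) (mag (low b))) hsz)
        have htau : tau s(low a, low b) = s(low (a+1), low (b+1)) := rfl
        rw [htau] at hcr
        rcases hcr with ⟨i,j,p',q',hcond,hu,hv⟩|⟨i,j,p',q',hcond,hu,hv⟩|⟨i,j,p',q',hcond,hu,hv⟩|⟨i,j,p',q',hcond,hu,hv⟩|⟨i,j,p',q',hcond,hu,hv⟩|⟨i,j,p',q',hcond,hu,hv⟩|⟨i,j,p',q',hcond,hu,hv⟩ <;>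
          simp only [Sym2.eq_iff, up.injEq, low.injEq, reduceCtorEq, and_false, false_and,
            and_true, true_and, or_false, false_or, or_self] at hu hv <;>
          omega

end Strip

open Strip in
/-- Every τ-compact Ptolemy diagram satisfies condition (C):
`T ∪ nc T` contains a connecting arc. -/
theorem tauCompact_condC (T : Set Curve) (hT : IsPtolemy T)
    (h : TauCompact T) : CondC T := by
  open MPoint in
  by_contra hC
  rw [CondC] at hC
  push_neg at hC
  have hTnc : ∀ v ∈ T, ¬ IsConnecting v := fun v hv => hC v (Or.inl hv)
  have hcov : ∀ i j : ℤ,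
      (∃ p q : ℤ, s(up p, up q) ∈ T ∧ p < i ∧ i < q) ∨
      (∃ p q : ℤ, s(low p, low q) ∈ T ∧ p < j ∧ j < q) := by
    intro i j
    have hu : s(up i, low j) ∉ nc T := fun hm => hC _ (Or.inr hm) ⟨i, j, rfl⟩
    have h2 : ¬ ∀ v ∈ T, ¬ Crosses s(up i, low j) v := fun hv => hu ⟨arcConn, hv⟩
    push_neg at h2
    obtain ⟨v, hvT, hcr⟩ := h2
    rcases hcr with ⟨i',j',p',q',hcond,hueq,hveq⟩|⟨i',j',p',q',hcond,hueq,hveq⟩|⟨i',j',p',q',hcond,hueq,hveq⟩|⟨i',j',p',q',hcond,hueq,hveq⟩|⟨i',j',p',q',hcond,hueq,hveq⟩|⟨i',j',p',q',hcond,hueq,hveq⟩|⟨i',j',p',q',hcond,hueq,hveq⟩ <;>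
      simp only [Sym2.eq_iff, up.injEq, low.injEq, reduceCtorEq, and_false, false_and,
        and_true, true_and, or_false, false_or, or_self] at hueq
    · obtain ⟨h1, h2⟩ := hueq
      exact Or.inl ⟨p', q', hveq ▸ hvT, by omega, by omega⟩
    · obtain ⟨h1, h2⟩ := hueq
      refine Or.inr ⟨q', p', ?_, by omega, by omega⟩
      rw [Sym2.eq_swap, ← hveq]; exact hvT
    · exact absurd ⟨p', q', hveq⟩ (hTnc v hvT)
  by_cases hall : ∀ c : ℤ, ∃ p q : ℤ, s(up p, up q) ∈ T ∧ p < c ∧ c < q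
  · exact mainUpper T hT h hTnc hall
  · obtain ⟨i0, hi0⟩ := not_forall.mp hall
    have hlow : ∀ c : ℤ, ∃ p q : ℤ, s(low p, low q) ∈ T ∧ p < c ∧ c < q := by
      intro c
      rcases hcov i0 c with h1 | h2
      · exact absurd h1 hi0
      · exact h2
    exact mainLower T hT h hTnc hlow
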